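/- arXiv:1304.1317 — 3 statements merged into one kernel-verified Lean document; each statement's English description precedes it below -/
import Mathlib

section
/- Let 0 < s < 1 and 2 − 2s < α ≤ 2, and let Ω ⊂ ℝ² be a bounded set. There is a constant C, depending only on s, α and Ω, such that for every Borel probability measure μ supported in Ω which is α-dimensional with constant c, and every g ∈ L²(ℝ²), one has ∫ (∫_{ℝ²} |x−y|^{s−2} |g(y)| dy) dμ(x) ≤ C √c ‖g‖_{L²(ℝ²)}. -/
/-!
By Fubini and Cauchy–Schwarz in `y`, the left side is at most `‖g‖₂` times the square root of
`∫∫ (∫ |x - y|^{s-2} |x' - y|^{s-2} dy) dμ(x) dμ(x')`. For `0 < s < 1` the inner integral is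
`O(|x - x'|^{2s-2})`, and the energy `∫∫ |x - x'|^{2s-2} dμ dμ` is `O(c)` because `μ` has bounded
support and `α + 2s - 2 > 0`. Both potential bounds come from summing over dyadic shells around
the singularity. Replacing `|x - y|` by the smaller sup distance of `ℝ × ℝ` only enlarges the
kernel.
-/

open MeasureTheory Real Filter
open scoped ENNReal

noncomputable section

/-- Fourier transform with the convention `f̂ ξ = ∫ f z e^{-i z·ξ} dz`. -/
def FT (f : ℝ × ℝ → ℂ) (ξ : ℝ × ℝ) : ℂ :=
  ∫ z : ℝ × ℝ, Complex.exp (-(Complex.I * ((z.1 * ξ.1 + z.2 * ξ.2 : ℝ) : ℂ))) * f z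

/-- The Bukhgeim phase `φ_{k,x}(z) = (k/4)((z₁-x₁)² - (z₂-x₂)²)`. -/
def phase (k : ℝ) (x z : ℝ × ℝ) : ℝ :=
  k / 4 * ((z.1 - x.1) ^ 2 - (z.2 - x.2) ^ 2)

/-- Squared weighted (homogeneous Sobolev-type) norm `∫ |ξ|^{2s} |g ξ|² dξ`
on the Fourier side. -/
def wNormSq (s : ℝ) (g : ℝ × ℝ → ℂ) : ℝ≥0∞ :=
  ∫⁻ ξ : ℝ × ℝ, ENNReal.ofReal ((ξ.1 ^ 2 + ξ.2 ^ 2) ^ s) * (‖g ξ‖₊ : ℝ≥0∞) ^ 2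

/-- Squared inhomogeneous Sobolev norm `∫ (1+|ξ|²)^s |g ξ|² dξ` on the Fourier side. -/
def sobNormSq (s : ℝ) (g : ℝ × ℝ → ℂ) : ℝ≥0∞ :=
  ∫⁻ ξ : ℝ × ℝ, ENNReal.ofReal ((1 + ξ.1 ^ 2 + ξ.2 ^ 2) ^ s) * (‖g ξ‖₊ : ℝ≥0∞) ^ 2

/-- `Fhat` is the Fourier transform of the (square-integrable) function `F`, in the
distributional sense given by the multiplication formula against Schwartz functions. -/
def IsFT (F Fhat : ℝ × ℝ → ℂ) : Prop :=
  ∀ ψ : SchwartzMap (ℝ × ℝ) ℂ,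
    ∫ z : ℝ × ℝ, F z * FT (fun w => ψ w) z = ∫ ξ : ℝ × ℝ, Fhat ξ * ψ ξ

/-- The modulation operator `M^{εk}F = χ_Q e^{iε φ_{k,x}} F`. -/
def Mop (Q : Set (ℝ × ℝ)) (ε k : ℝ) (x : ℝ × ℝ) (F : ℝ × ℝ → ℂ) : ℝ × ℝ → ℂ :=
  Q.indicator fun z => Complex.exp (Complex.I * ((ε * phase k x z : ℝ) : ℂ)) * F z

/-- The Cauchy transform `∂_z^{-1} g (z) = (1/π) ∫ g(w) / ((z₁-w₁) - i(z₂-w₂)) dw`. -/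
def CauchyZ (g : ℝ × ℝ → ℂ) (z : ℝ × ℝ) : ℂ :=
  (Real.pi : ℂ)⁻¹ *
    ∫ w : ℝ × ℝ, g w / (((z.1 - w.1 : ℝ) : ℂ) - Complex.I * ((z.2 - w.2 : ℝ) : ℂ))

/-- Euclidean ball in `ℝ × ℝ`. -/
def EBall (x : ℝ × ℝ) (r : ℝ) : Set (ℝ × ℝ) :=
  {y | (y.1 - x.1) ^ 2 + (y.2 - x.2) ^ 2 < r ^ 2}

/-- The Bukhgeim main term `T^k_1[V](x) = (k/(4π)) ∫ e^{iφ_{k,x}(z)} V(z) dz`. -/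
def TT (V : ℝ × ℝ → ℂ) (k : ℝ) (x : ℝ × ℝ) : ℂ :=
  ((k / (4 * Real.pi) : ℝ) : ℂ) *
    ∫ z : ℝ × ℝ, Complex.exp (Complex.I * ((phase k x z : ℝ) : ℂ)) * V z

open Metric Topology

theorem ENNReal.rpow_le_rpow_of_nonpos {x y : ℝ≥0∞} {z : ℝ} (hxy : x ≤ y) (hz : z ≤ 0) :
    y ^ z ≤ x ^ z := by
  rw [← neg_neg z, ENNReal.rpow_neg y, ENNReal.rpow_neg x]
  exact ENNReal.inv_le_inv.2 (ENNReal.rpow_le_rpow hxy (neg_nonneg.2 hz))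

theorem ENNReal.rpow_mul_rpow_le_of_le_max {a b ρ : ℝ≥0∞} {q : ℝ} (hq : q ≤ 0)
    (hρ : ρ ≤ max a b) : a ^ q * b ^ q ≤ a ^ q * max ρ a ^ q + b ^ q * max ρ b ^ q := by
  wlog hab : a ≤ b generalizing a b
  · rw [mul_comm, add_comm]
    exact this (max_comm a b ▸ hρ) (le_of_not_ge hab)
  have hb : max ρ a ≤ b := max_le (hρ.trans_eq (max_eq_right hab)) hab
  exact (mul_le_mul_right (ENNReal.rpow_le_rpow_of_nonpos hb hq) _).trans le_self_add

theorem ENNReal.tsum_ofReal_mul_geometric {K w : ℝ} (hK : 0 ≤ K) (hw₀ : 0 ≤ w) (hw₁ : w < 1) :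
    ∑' j : ℕ, ENNReal.ofReal (K * w ^ j) = ENNReal.ofReal (K / (1 - w)) := by
  rw [← ENNReal.ofReal_tsum_of_nonneg (fun j => by positivity)
    ((summable_geometric_of_lt_one hw₀ hw₁).mul_left K), tsum_mul_left,
    tsum_geometric_of_lt_one hw₀ hw₁, div_eq_mul_inv]

theorem Real.div_two_pow_rpow {R : ℝ} (hR : 0 ≤ R) (p : ℝ) (j : ℕ) :
    (R / 2 ^ j) ^ p = R ^ p * ((2 : ℝ) ^ (-p)) ^ j := by
  rw [Real.div_rpow hR (by positivity), ← Real.rpow_pow_comm zero_le_two,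
    Real.rpow_neg zero_le_two, inv_pow, div_eq_mul_inv]

theorem Real.mul_two_pow_rpow {ρ : ℝ} (hρ : 0 ≤ ρ) (p : ℝ) (j : ℕ) :
    (ρ * 2 ^ j) ^ p = ρ ^ p * ((2 : ℝ) ^ p) ^ j := by
  rw [Real.mul_rpow hρ (by positivity), ← Real.rpow_pow_comm zero_le_two]

theorem MeasureTheory.lintegral_le_tsum_mul_measure {X : Type*} [MeasurableSpace X]
    {ν : Measure X} {f : X → ℝ≥0∞} {S : ℕ → Set X} (hS : ∀ j, MeasurableSet (S j))
    {a : ℕ → ℝ≥0∞} (h : ∀ᵐ x ∂ν, ∃ j, x ∈ S j ∧ f x ≤ a j) :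
    ∫⁻ x, f x ∂ν ≤ ∑' j, a j * ν (S j) :=
  calc ∫⁻ x, f x ∂ν ≤ ∫⁻ x, ∑' j, (S j).indicator (fun _ => a j) x ∂ν := by
        refine lintegral_mono_ae (h.mono ?_)
        rintro x ⟨j, hxj, hfx⟩
        calc f x ≤ a j := hfx
          _ = (S j).indicator (fun _ => a j) x := (Set.indicator_of_mem hxj fun _ => a j).symm
          _ ≤ _ := ENNReal.le_tsum j
    _ = ∑' j, a j * ν (S j) := by
        rw [lintegral_tsum fun j => (measurable_const.indicator (hS j)).aemeasurable]
        exact tsum_congr fun j => lintegral_indicator_const (hS j) _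

section GrowthBound

variable {X : Type*} [PseudoMetricSpace X] [MeasurableSpace X] {ν : Measure X} {x : X} {K α : ℝ}

theorem measure_closedBall_zero_eq_zero_of_le_rpow (hα : 0 < α)
    (hν : ∀ r, 0 < r → ν (closedBall x r) ≤ ENNReal.ofReal (K * r ^ α)) :
    ν (closedBall x 0) = 0 := by
  have hlim : Tendsto (fun r : ℝ => ENNReal.ofReal (K * r ^ α)) (𝓝[>] 0) (𝓝 0) := by
    have hcont : ContinuousAt (fun r : ℝ => ENNReal.ofReal (K * r ^ α)) 0 :=
      ENNReal.continuous_ofReal.continuousAt.comp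
        (continuousAt_const.mul (Real.continuousAt_rpow_const 0 α (Or.inr hα.le)))
    simpa [Real.zero_rpow hα.ne'] using hcont.continuousWithinAt.tendsto
  exact nonpos_iff_eq_zero.1 <| ge_of_tendsto hlim <| eventually_nhdsWithin_of_forall
    fun r hr => (measure_mono (closedBall_subset_closedBall (le_of_lt hr))).trans (hν r hr)

theorem lintegral_edist_rpow_le_of_ae_dist_le [OpensMeasurableSpace X] {q R : ℝ} (hK : 0 ≤ K)
    (hq : q ≤ 0) (hαq : 0 < α + q) (hR : 0 < R)
    (hν : ∀ r, 0 < r → ν (closedBall x r) ≤ ENNReal.ofReal (K * r ^ α))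
    (hsupp : ∀ᵐ y ∂ν, dist x y ≤ R) :
    ∫⁻ y, edist x y ^ q ∂ν ≤
      ENNReal.ofReal (2 ^ (-q) / (1 - 2 ^ (-(α + q))) * K * R ^ (α + q)) := by
  have hw : (2 : ℝ) ^ (-(α + q)) < 1 := Real.rpow_lt_one_of_one_lt_of_neg one_lt_two (by linarith)
  have hx : ν (closedBall x 0) = 0 := measure_closedBall_zero_eq_zero_of_le_rpow (by linarith) hν
  calc ∫⁻ y, edist x y ^ q ∂ν
      ≤ ∑' j : ℕ, ENNReal.ofReal ((R / 2 ^ (j + 1)) ^ q) * ν (closedBall x (R / 2 ^ j)) := by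
        refine lintegral_le_tsum_mul_measure (fun _ => measurableSet_closedBall) ?_
        filter_upwards [hsupp, measure_eq_zero_iff_ae_notMem.1 hx] with y hyR hy0
        have hy : 0 < dist x y := by simpa [mem_closedBall, dist_comm] using hy0
        obtain ⟨j, hj, hj'⟩ := exists_nat_pow_near ((one_le_div hy).2 hyR) one_lt_two
        refine ⟨j, mem_closedBall'.2 ((le_div_iff₀ (by positivity)).2 ?_), ?_⟩
        · rwa [le_div_iff₀ hy, mul_comm] at hj
        · rw [edist_dist, ENNReal.ofReal_rpow_of_pos hy]
          refine ENNReal.ofReal_le_ofReal (Real.rpow_le_rpow_of_nonpos (by positivity) ?_ hq)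
          rw [div_le_iff₀ (by positivity)]
          rw [div_lt_iff₀ hy] at hj'
          linarith
    _ ≤ ∑' j : ℕ, ENNReal.ofReal (2 ^ (-q) * K * R ^ (α + q) * (2 ^ (-(α + q))) ^ j) := by
        refine ENNReal.tsum_le_tsum fun j => ?_
        grw [hν _ (by positivity), ← ENNReal.ofReal_mul (by positivity)]
        refine le_of_eq (congrArg ENNReal.ofReal ?_)
        rw [pow_succ, ← div_div, Real.div_rpow (by positivity) zero_le_two,
          Real.div_two_pow_rpow hR.le, Real.div_two_pow_rpow hR.le, Real.rpow_add hR,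
          neg_add, Real.rpow_add two_pos (-α),
          Real.rpow_neg zero_le_two q]
        ring
    _ = _ := by
        rw [ENNReal.tsum_ofReal_mul_geometric (by positivity) (by positivity) hw]
        ring_nf

theorem lintegral_edist_rpow_le_of_ae_lt_dist [OpensMeasurableSpace X] {p ρ : ℝ} (hK : 0 ≤ K)
    (hp : p ≤ 0) (hαp : α + p < 0) (hρ : 0 < ρ)
    (hν : ∀ r, 0 < r → ν (closedBall x r) ≤ ENNReal.ofReal (K * r ^ α))
    (hsupp : ∀ᵐ y ∂ν, ρ < dist x y) :
    ∫⁻ y, edist x y ^ p ∂ν ≤ ENNReal.ofReal (2 ^ α / (1 - 2 ^ (α + p)) * K * ρ ^ (α + p)) := by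
  have hw : (2 : ℝ) ^ (α + p) < 1 := Real.rpow_lt_one_of_one_lt_of_neg one_lt_two hαp
  calc ∫⁻ y, edist x y ^ p ∂ν
      ≤ ∑' j : ℕ, ENNReal.ofReal ((ρ * 2 ^ j) ^ p) * ν (closedBall x (ρ * 2 ^ (j + 1))) := by
        refine lintegral_le_tsum_mul_measure (fun _ => measurableSet_closedBall) ?_
        filter_upwards [hsupp] with y hy
        obtain ⟨j, hj, hj'⟩ := exists_nat_pow_near ((one_le_div hρ).2 hy.le) one_lt_two
        refine ⟨j, mem_closedBall'.2 ?_, ?_⟩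
        · rw [div_lt_iff₀ hρ] at hj'
          linarith
        · rw [edist_dist, ENNReal.ofReal_rpow_of_pos (hρ.trans hy)]
          refine ENNReal.ofReal_le_ofReal (Real.rpow_le_rpow_of_nonpos (by positivity) ?_ hp)
          rwa [le_div_iff₀ hρ, mul_comm] at hj
    _ ≤ ∑' j : ℕ, ENNReal.ofReal (2 ^ α * K * ρ ^ (α + p) * (2 ^ (α + p)) ^ j) := by
        refine ENNReal.tsum_le_tsum fun j => ?_
        grw [hν _ (by positivity), ← ENNReal.ofReal_mul (by positivity)]
        refine le_of_eq (congrArg ENNReal.ofReal ?_)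
        rw [pow_succ, ← mul_assoc ρ, Real.mul_rpow (by positivity) zero_le_two,
          Real.mul_two_pow_rpow hρ.le, Real.mul_two_pow_rpow hρ.le, Real.rpow_add hρ,
          Real.rpow_add two_pos]
        ring
    _ = _ := by
        rw [ENNReal.tsum_ofReal_mul_geometric (by positivity) (by positivity) hw]
        ring_nf

theorem lintegral_edist_rpow_mul_max_rpow_le [OpensMeasurableSpace X] {q ρ : ℝ} (hK : 0 ≤ K)
    (hαq : 0 < α + q) (hα2q : α + 2 * q < 0) (hρ : 0 < ρ)
    (hν : ∀ r, 0 < r → ν (closedBall x r) ≤ ENNReal.ofReal (K * r ^ α)) :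
    ∫⁻ y, edist x y ^ q * max (ENNReal.ofReal ρ) (edist x y) ^ q ∂ν ≤
      ENNReal.ofReal ((2 ^ (-q) / (1 - 2 ^ (-(α + q))) + 2 ^ α / (1 - 2 ^ (α + 2 * q))) * K *
        ρ ^ (α + 2 * q)) := by
  have hq : q < 0 := by linarith
  have hC₁ : 0 ≤ 2 ^ (-q) / (1 - (2 : ℝ) ^ (-(α + q))) :=
    div_nonneg (by positivity) (sub_nonneg.2 (Real.rpow_le_one_of_one_le_of_nonpos one_le_two
      (by linarith)))
  have hC₂ : 0 ≤ 2 ^ α / (1 - (2 : ℝ) ^ (α + 2 * q)) :=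
    div_nonneg (by positivity) (sub_nonneg.2 (Real.rpow_le_one_of_one_le_of_nonpos one_le_two
      hα2q.le))
  have hνs : ∀ (s : Set X) r, 0 < r → ν.restrict s (closedBall x r) ≤ ENNReal.ofReal (K * r ^ α) :=
    fun s r hr => (Measure.restrict_apply_le _ _).trans (hν r hr)
  have hnear : ∫⁻ y in closedBall x ρ, edist x y ^ q * max (ENNReal.ofReal ρ) (edist x y) ^ q ∂ν
      = ENNReal.ofReal (ρ ^ q) * ∫⁻ y in closedBall x ρ, edist x y ^ q ∂ν := by
    rw [← lintegral_const_mul' _ _ ENNReal.ofReal_ne_top]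
    refine setLIntegral_congr_fun measurableSet_closedBall fun y hy => ?_
    rw [max_eq_left ((edist_le_ofReal hρ.le).2 (mem_closedBall'.1 hy)),
      ENNReal.ofReal_rpow_of_pos hρ, mul_comm]
  have hfar : ∫⁻ y in (closedBall x ρ)ᶜ, edist x y ^ q * max (ENNReal.ofReal ρ) (edist x y) ^ q ∂ν
      = ∫⁻ y in (closedBall x ρ)ᶜ, edist x y ^ (2 * q) ∂ν := by
    refine setLIntegral_congr_fun measurableSet_closedBall.compl fun y hy => ?_
    have hρy : ρ < dist x y := not_le.1 (mt mem_closedBall'.2 hy)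
    have hy : ENNReal.ofReal ρ < edist x y := by
      rw [edist_dist]
      exact (ENNReal.ofReal_lt_ofReal_iff (hρ.trans hρy)).2 hρy
    rw [max_eq_right hy.le, two_mul, ENNReal.rpow_add _ _ (pos_of_gt hy).ne' (edist_ne_top _ _)]
  rw [← lintegral_add_compl _ measurableSet_closedBall, hnear, hfar]
  grw [lintegral_edist_rpow_le_of_ae_dist_le hK hq.le hαq hρ (hνs _)
      ((ae_restrict_mem measurableSet_closedBall).mono fun y hy => mem_closedBall'.1 hy),
    lintegral_edist_rpow_le_of_ae_lt_dist hK (by linarith) hα2q hρ (hνs _)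
      ((ae_restrict_mem measurableSet_closedBall.compl).mono fun y hy =>
        not_le.1 (mt mem_closedBall'.2 hy)),
    ← ENNReal.ofReal_mul (by positivity), ← ENNReal.ofReal_add (by positivity) (by positivity)]
  refine le_of_eq (congrArg ENNReal.ofReal ?_)
  have hρq : ρ ^ q * ρ ^ (α + q) = ρ ^ (α + 2 * q) := by
    rw [← Real.rpow_add hρ]
    ring_nf
  rw [← hρq]
  ring

theorem exists_lintegral_edist_rpow_mul_edist_rpow_le [OpensMeasurableSpace X] {q : ℝ}
    (hK : 0 < K) (hαq : 0 < α + q) (hα2q : α + 2 * q < 0)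
    (hν : ∀ x r, 0 < r → ν (closedBall x r) ≤ ENNReal.ofReal (K * r ^ α)) :
    ∃ C : ℝ, 0 < C ∧ ∀ x x' : X,
      ∫⁻ y, edist x y ^ q * edist x' y ^ q ∂ν ≤ ENNReal.ofReal C * edist x x' ^ (α + 2 * q) := by
  set M : ℝ := 2 ^ (-q) / (1 - 2 ^ (-(α + q))) + 2 ^ α / (1 - 2 ^ (α + 2 * q))
  have hM : 0 < M := by
    refine add_pos_of_nonneg_of_pos (div_nonneg (by positivity) (sub_nonneg.2
      (Real.rpow_le_one_of_one_le_of_nonpos one_le_two (by linarith))))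
      (div_pos (by positivity) (sub_pos.2 (Real.rpow_lt_one_of_one_lt_of_neg one_lt_two hα2q)))
  refine ⟨2 * M * K * 2 ^ (-(α + 2 * q)), by positivity, fun x x' => ?_⟩
  rcases (dist_nonneg (x := x) (y := x')).eq_or_lt with hxx' | hxx'
  · rw [edist_dist, ← hxx', ENNReal.ofReal_zero, ENNReal.zero_rpow_of_neg hα2q,
      ENNReal.mul_top (by positivity)]
    exact le_top
  set ρ := dist x x' / 2
  have hρ : 0 < ρ := by positivity
  have hmax : ∀ y, ENNReal.ofReal ρ ≤ max (edist x y) (edist x' y) := fun y => by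
    rw [edist_dist, edist_dist, ← ENNReal.ofReal_max]
    refine ENNReal.ofReal_le_ofReal ?_
    have := dist_triangle_right x x' y
    grind
  have hmeas : ∀ z : X,
      Measurable fun y => edist z y ^ q * max (ENNReal.ofReal ρ) (edist z y) ^ q :=
    fun z => by fun_prop
  calc ∫⁻ y, edist x y ^ q * edist x' y ^ q ∂ν
      ≤ ∫⁻ y, (edist x y ^ q * max (ENNReal.ofReal ρ) (edist x y) ^ q +
          edist x' y ^ q * max (ENNReal.ofReal ρ) (edist x' y) ^ q) ∂ν :=
        -- each `y` is at distance `≥ ρ` from `x` or from `x'`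
        lintegral_mono fun y => ENNReal.rpow_mul_rpow_le_of_le_max (by linarith) (hmax y)
    _ = ∫⁻ y, edist x y ^ q * max (ENNReal.ofReal ρ) (edist x y) ^ q ∂ν +
          ∫⁻ y, edist x' y ^ q * max (ENNReal.ofReal ρ) (edist x' y) ^ q ∂ν :=
        lintegral_add_left (hmeas x) _
    _ ≤ ENNReal.ofReal (M * K * ρ ^ (α + 2 * q)) + ENNReal.ofReal (M * K * ρ ^ (α + 2 * q)) :=
        add_le_add (lintegral_edist_rpow_mul_max_rpow_le hK.le hαq hα2q hρ (hν x))
          (lintegral_edist_rpow_mul_max_rpow_le hK.le hαq hα2q hρ (hν x'))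
    _ = ENNReal.ofReal (2 * M * K * 2 ^ (-(α + 2 * q))) * edist x x' ^ (α + 2 * q) := by
        rw [edist_dist, ENNReal.ofReal_rpow_of_pos hxx', ← ENNReal.ofReal_mul (by positivity),
          ← ENNReal.ofReal_add (by positivity) (by positivity), Real.div_rpow hxx'.le zero_le_two,
          Real.rpow_neg zero_le_two]
        ring_nf

theorem lintegral_lintegral_edist_rpow_le [OpensMeasurableSpace X] {q D : ℝ} {Ω : Set X}
    (hK : 0 ≤ K) (hq : q ≤ 0) (hαq : 0 < α + q) (hD : 0 < D)
    (hν : ∀ x r, 0 < r → ν (closedBall x r) ≤ ENNReal.ofReal (K * r ^ α))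
    (hΩ : ν Ωᶜ = 0) (hΩD : ∀ x ∈ Ω, ∀ y ∈ Ω, dist x y ≤ D) :
    ∫⁻ x, ∫⁻ y, edist x y ^ q ∂ν ∂ν ≤
      ENNReal.ofReal (2 ^ (-q) / (1 - 2 ^ (-(α + q))) * K * D ^ (α + q)) * ν Set.univ := by
  have hΩae : ∀ᵐ y ∂ν, y ∈ Ω := mem_ae_iff.2 hΩ
  rw [← lintegral_const]
  refine lintegral_mono_ae (hΩae.mono fun x hx => ?_)
  exact lintegral_edist_rpow_le_of_ae_dist_le hK hq hαq hD (hν x)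
    (hΩae.mono fun y hy => hΩD x hx y hy)

end GrowthBound

theorem lintegral_lintegral_mul_enorm_le {X Y E : Type*} [MeasurableSpace X] [MeasurableSpace Y]
    [NormedAddCommGroup E] {μ : Measure X} {ν : Measure Y} [SFinite μ] [SFinite ν]
    {k : X → Y → ℝ≥0∞} (hk : Measurable (Function.uncurry k)) {g : Y → E}
    (hg : AEStronglyMeasurable g ν) :
    ∫⁻ x, ∫⁻ y, k x y * ‖g y‖ₑ ∂ν ∂μ ≤
      (∫⁻ x, ∫⁻ x', ∫⁻ y, k x y * k x' y ∂ν ∂μ ∂μ) ^ (1 / 2 : ℝ) * eLpNorm g 2 ν := by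
  set F : Y → ℝ≥0∞ := fun y => ∫⁻ x, k x y ∂μ
  have hkx : ∀ y, Measurable fun x => k x y :=
    fun y => hk.comp (measurable_id.prodMk measurable_const)
  have hF : Measurable F := hk.lintegral_prod_left'
  have hFsq : ∫⁻ y, F y ^ (2 : ℝ) ∂ν = ∫⁻ x, ∫⁻ x', ∫⁻ y, k x y * k x' y ∂ν ∂μ ∂μ := by
    calc ∫⁻ y, F y ^ (2 : ℝ) ∂ν = ∫⁻ y, ∫⁻ x, ∫⁻ x', k x y * k x' y ∂μ ∂μ ∂ν := by
          refine lintegral_congr fun y => ?_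
          rw [ENNReal.rpow_two, sq, lintegral_lintegral_mul (hkx y).aemeasurable
            (hkx y).aemeasurable]
      _ = ∫⁻ x, ∫⁻ y, ∫⁻ x', k x y * k x' y ∂μ ∂ν ∂μ :=
          lintegral_lintegral_swap (Measurable.lintegral_prod_right'
            ((hk.comp (measurable_fst.snd.prodMk measurable_fst.fst)).mul
              (hk.comp (measurable_snd.prodMk measurable_fst.fst)))).aemeasurable
      _ = ∫⁻ x, ∫⁻ x', ∫⁻ y, k x y * k x' y ∂ν ∂μ ∂μ :=
          lintegral_congr fun x => lintegral_lintegral_swap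
            ((hk.comp (measurable_const.prodMk measurable_fst)).mul
              (hk.comp (measurable_snd.prodMk measurable_fst))).aemeasurable
  calc ∫⁻ x, ∫⁻ y, k x y * ‖g y‖ₑ ∂ν ∂μ = ∫⁻ y, F y * ‖g y‖ₑ ∂ν := by
        rw [lintegral_lintegral_swap (hk.aemeasurable.mul
          (hg.enorm.comp_quasiMeasurePreserving Measure.quasiMeasurePreserving_snd))]
        exact lintegral_congr fun y => lintegral_mul_const _ (hkx y)
    _ ≤ (∫⁻ y, F y ^ (2 : ℝ) ∂ν) ^ (1 / 2 : ℝ) * (∫⁻ y, ‖g y‖ₑ ^ (2 : ℝ) ∂ν) ^ (1 / 2 : ℝ) :=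
        ENNReal.lintegral_mul_le_Lp_mul_Lq ν Real.HolderConjugate.two_two hF.aemeasurable
          hg.enorm
    _ = _ := by
        rw [hFsq, eLpNorm_eq_lintegral_rpow_enorm_toReal two_ne_zero ENNReal.ofNat_ne_top]
        norm_num

theorem volume_closedBall_real_prod (x : ℝ × ℝ) {r : ℝ} (hr : 0 ≤ r) :
    volume (closedBall x r) = ENNReal.ofReal (4 * r ^ (2 : ℝ)) := by
  rw [← closedBall_prod_same, Measure.volume_eq_prod, Measure.prod_prod, Real.volume_closedBall,
    Real.volume_closedBall, ← ENNReal.ofReal_mul (by positivity), Real.rpow_two]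
  ring_nf

theorem closedBall_subset_EBall (x : ℝ × ℝ) {r : ℝ} (hr : 0 < r) :
    closedBall x r ⊆ EBall x (2 * r) := by
  intro y hy
  rw [mem_closedBall, Prod.dist_eq, max_le_iff, Real.dist_eq, Real.dist_eq] at hy
  obtain ⟨h₁, h₂⟩ := hy
  change (y.1 - x.1) ^ 2 + (y.2 - x.2) ^ 2 < (2 * r) ^ 2
  nlinarith [abs_le.1 h₁, abs_le.1 h₂]

theorem measure_closedBall_le_of_measure_EBall_le {μ : Measure (ℝ × ℝ)} {c α : ℝ}
    (hμ : ∀ (x : ℝ × ℝ) (r : ℝ), 0 < r → μ (EBall x r) ≤ ENNReal.ofReal (c * r ^ α))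
    (x : ℝ × ℝ) {r : ℝ} (hr : 0 < r) :
    μ (closedBall x r) ≤ ENNReal.ofReal (c * 2 ^ α * r ^ α) :=
  calc μ (closedBall x r) ≤ μ (EBall x (2 * r)) := measure_mono (closedBall_subset_EBall x hr)
    _ ≤ _ := hμ x _ (by positivity)
    _ = _ := by rw [Real.mul_rpow zero_le_two hr.le, mul_assoc]

theorem ofReal_rpow_le_edist_rpow {p : ℝ} (hp : p < 0) (x y : ℝ × ℝ) :
    ENNReal.ofReal (((x.1 - y.1) ^ 2 + (x.2 - y.2) ^ 2) ^ (p / 2)) ≤ edist x y ^ p := by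
  rcases eq_or_ne x y with rfl | hxy
  · simp [ENNReal.zero_rpow_of_neg hp]
  have hd : 0 < dist x y := dist_pos.2 hxy
  have hle : dist x y ≤ √((x.1 - y.1) ^ 2 + (x.2 - y.2) ^ 2) := by
    rw [Prod.dist_eq, Real.dist_eq, Real.dist_eq]
    exact max_le (Real.abs_le_sqrt (by nlinarith)) (Real.abs_le_sqrt (by nlinarith))
  have hsqrt : ((x.1 - y.1) ^ 2 + (x.2 - y.2) ^ 2) ^ (p / 2) =
      √((x.1 - y.1) ^ 2 + (x.2 - y.2) ^ 2) ^ p := by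
    rw [Real.sqrt_eq_rpow, ← Real.rpow_mul (by positivity), one_div_mul_eq_div]
  rw [edist_dist, ENNReal.ofReal_rpow_of_pos hd, hsqrt]
  exact ENNReal.ofReal_le_ofReal (Real.rpow_le_rpow_of_nonpos hd hle hp.le)

theorem exists_lintegral_riesz_potential_le {s : ℝ} (hs : 0 < s) (hs' : s < 1) :
    ∃ A : ℝ, 0 < A ∧ ∀ (μ : Measure (ℝ × ℝ)) [SFinite μ] {E : Type*} [NormedAddCommGroup E]
      (g : ℝ × ℝ → E), AEStronglyMeasurable g volume →
      ∫⁻ x, ∫⁻ y, ENNReal.ofReal (((x.1 - y.1) ^ 2 + (x.2 - y.2) ^ 2) ^ ((s - 2) / 2)) *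
          ‖g y‖ₑ ∂volume ∂μ ≤
        (ENNReal.ofReal A * ∫⁻ x, ∫⁻ x', edist x x' ^ (2 * s - 2) ∂μ ∂μ) ^ (1 / 2 : ℝ) *
          eLpNorm g 2 volume := by
  obtain ⟨A, hA, hcomp⟩ := exists_lintegral_edist_rpow_mul_edist_rpow_le (ν := volume)
    (q := s - 2) four_pos (by linarith) (by linarith)
    fun x r hr => (volume_closedBall_real_prod x hr.le).le
  refine ⟨A, hA, fun μ _ E _ g hg => ?_⟩
  calc _ ≤ ∫⁻ x, ∫⁻ y, edist x y ^ (s - 2) * ‖g y‖ₑ ∂volume ∂μ := by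
        gcongr with x y
        exact ofReal_rpow_le_edist_rpow (by linarith) x y
    _ ≤ (∫⁻ x, ∫⁻ x', ∫⁻ y, edist x y ^ (s - 2) * edist x' y ^ (s - 2) ∂volume ∂μ ∂μ)
          ^ (1 / 2 : ℝ) * eLpNorm g 2 volume :=
        lintegral_lintegral_mul_enorm_le (k := fun x y => edist x y ^ (s - 2))
          (ENNReal.continuous_rpow_const.comp continuous_edist).measurable hg
    _ ≤ (∫⁻ x, ∫⁻ x', ENNReal.ofReal A * edist x x' ^ (2 * s - 2) ∂μ ∂μ)
          ^ (1 / 2 : ℝ) * eLpNorm g 2 volume := by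
        gcongr with x x'
        convert hcomp x x' using 3
        ring
    _ = _ := by simp_rw [lintegral_const_mul' _ _ ENNReal.ofReal_ne_top]

theorem stmt8_general (s α : ℝ) (hs : 0 < s) (hs' : s < 1) (hα : 2 - 2 * s < α)
    (Ω : Set (ℝ × ℝ)) (hΩ : Bornology.IsBounded Ω) :
    ∃ C : ℝ, 0 < C ∧
      ∀ (μ : Measure (ℝ × ℝ)) (_ : IsProbabilityMeasure μ) (c : ℝ), 0 ≤ c →
        μ Ωᶜ = 0 →
        (∀ (x : ℝ × ℝ) (r : ℝ), 0 < r → μ (EBall x r) ≤ ENNReal.ofReal (c * r ^ α)) →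
        ∀ g : ℝ × ℝ → ℂ, MemLp g 2 volume →
          (∫⁻ x, (∫⁻ y,
              ENNReal.ofReal (((x.1 - y.1) ^ 2 + (x.2 - y.2) ^ 2) ^ ((s - 2) / 2)) *
                (‖g y‖₊ : ℝ≥0∞) ∂volume) ∂μ) ≤
            ENNReal.ofReal (C * Real.sqrt c) * eLpNorm g 2 volume := by
  obtain ⟨D, hD⟩ := Metric.isBounded_iff.1 hΩ
  obtain ⟨A, hA, hpotential⟩ := exists_lintegral_riesz_potential_le hs hs'
  -- `B * c` is the bound of `lintegral_lintegral_edist_rpow_le` for `K = c * 2 ^ α`, `q = 2s - 2`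
  set B : ℝ := 2 ^ (-(2 * s - 2)) / (1 - 2 ^ (-(α + (2 * s - 2)))) * 2 ^ α *
    max D 1 ^ (α + (2 * s - 2))
  have hB : 0 < B := by
    have : (2 : ℝ) ^ (-(α + (2 * s - 2))) < 1 :=
      Real.rpow_lt_one_of_one_lt_of_neg one_lt_two (by linarith)
    have : 0 < max D 1 := one_pos.trans_le (le_max_right D 1)
    have : 0 < 1 - (2 : ℝ) ^ (-(α + (2 * s - 2))) := by linarith
    positivity
  refine ⟨√(A * B), by positivity, fun μ _ c hc hμΩ hμ g hg => ?_⟩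
  have henergy : ∫⁻ x, ∫⁻ x', edist x x' ^ (2 * s - 2) ∂μ ∂μ ≤ ENNReal.ofReal (B * c) := by
    grw [lintegral_lintegral_edist_rpow_le (by positivity) (by linarith) (by linarith)
      (one_pos.trans_le (le_max_right D 1)) (measure_closedBall_le_of_measure_EBall_le hμ) hμΩ
      fun x hx y hy => (hD hx hy).trans (le_max_left D 1), measure_univ, mul_one]
    exact le_of_eq (congrArg ENNReal.ofReal (by ring))
  calc _ ≤ (ENNReal.ofReal A * ∫⁻ x, ∫⁻ x', edist x x' ^ (2 * s - 2) ∂μ ∂μ) ^ (1 / 2 : ℝ) *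
        eLpNorm g 2 volume := hpotential μ g hg.aestronglyMeasurable
    _ ≤ (ENNReal.ofReal A * ENNReal.ofReal (B * c)) ^ (1 / 2 : ℝ) * eLpNorm g 2 volume := by
        grw [henergy]
    _ = ENNReal.ofReal (√(A * B) * √c) * eLpNorm g 2 volume := by
        rw [← ENNReal.ofReal_mul hA.le, ← mul_assoc,
          ENNReal.ofReal_rpow_of_nonneg (by positivity) (by norm_num), ← Real.sqrt_eq_rpow,
          Real.sqrt_mul (by positivity)]

/-- the elementary inequality (element0) of Section 4. Let
`0 < s < 1`, `2 - 2s < α ≤ 2` and let `Ω ⊆ ℝ²` be bounded. There is `C = C(s, α, Ω)`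
such that for every α-dimensional Borel probability measure `μ` with constant `c`
supported in `Ω` and every `g ∈ L²(ℝ²)`,
`∫ (∫ |x-y|^{s-2} |g(y)| dy) dμ(x) ≤ C √c ‖g‖_{L²}`. -/
theorem stmt8 (s α : ℝ) (hs : 0 < s) (hs' : s < 1) (hα : 2 - 2 * s < α) (hα' : α ≤ 2)
    (Ω : Set (ℝ × ℝ)) (hΩ : Bornology.IsBounded Ω) :
    ∃ C : ℝ, 0 < C ∧
      ∀ (μ : Measure (ℝ × ℝ)) (_ : IsProbabilityMeasure μ) (c : ℝ), 0 ≤ c →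
        μ Ωᶜ = 0 →
        (∀ (x : ℝ × ℝ) (r : ℝ), 0 < r → μ (EBall x r) ≤ ENNReal.ofReal (c * r ^ α)) →
        ∀ g : ℝ × ℝ → ℂ, MemLp g 2 volume →
          (∫⁻ x, (∫⁻ y,
              ENNReal.ofReal (((x.1 - y.1) ^ 2 + (x.2 - y.2) ^ 2) ^ ((s - 2) / 2)) *
                (‖g y‖₊ : ℝ≥0∞) ∂volume) ∂μ) ≤
            ENNReal.ofReal (C * Real.sqrt c) * eLpNorm g 2 volume :=
  stmt8_general s α hs hs' hα Ω hΩ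

end
end

section
/- Let 0 < s < 1 and 2 − s < α ≤ 2, and let Ω ⊂ ℝ² be a bounded set. There is a constant C, depending only on s, α and Ω, such that every Borel probability measure μ supported in Ω which is α-dimensional with constant c satisfies ∫∫ |x₁−y₁|^{s−1} |x₂−y₂|^{s−1} dμ(x) dμ(y) ≤ C c. -/
open MeasureTheory Real Filter
open scoped ENNReal

noncomputable section

/-!
Fix `x` and cut the plane around it into the dyadic rectangles on which
`|y₁ - x₁| ≈ 2^(J-m)` and `|y₂ - x₂| ≈ 2^(J-n)`. There the kernel is `≈ 2^((m+n)(1-s))`, while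
covering the rectangle by `≈ 2^|m-n|` balls whose radius is its shorter side shows that its mass
is `≲ c 2^|m-n| 2^(-max(m,n) α)`. The resulting double series is dominated by
`∑ 2^(-β(m+n))` with `β = min(s, α+s-2)`, which converges exactly because `α > 2 - s`. Since
`α > 1`, the two axis-parallel lines through `x`, where the kernel is infinite, are `μ`-null.
-/

open Metric Set Topology

def IsDimensional (μ : Measure (ℝ × ℝ)) (α c : ℝ) : Prop :=
  ∀ (x : ℝ × ℝ) (r : ℝ), 0 < r → μ (EBall x r) ≤ ENNReal.ofReal (c * r ^ α)

def productKernel (s : ℝ) (x y : ℝ × ℝ) : ℝ≥0∞ :=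
  (ENNReal.ofReal (|x.1 - y.1| ^ (1 - s)))⁻¹ * (ENNReal.ofReal (|x.2 - y.2| ^ (1 - s)))⁻¹

def dyadicShell (J : ℝ) (m : ℕ) : Set ℝ :=
  Ioc ((2 : ℝ) ^ (J - (m + 1))) (2 ^ (J - m))

lemma measurableSet_EBall (x : ℝ × ℝ) (r : ℝ) : MeasurableSet (EBall x r) :=
  measurableSet_lt (by fun_prop) measurable_const

lemma preimage_swap_EBall (x : ℝ × ℝ) (r : ℝ) : Prod.swap ⁻¹' EBall x r = EBall x.swap r := by
  ext y
  simp [EBall, add_comm]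

lemma prod_closedBall_subset_biUnion_EBall {a b r ρ : ℝ} (hr : 0 < r) :
    closedBall a r ×ˢ closedBall b ρ ⊆
      ⋃ k ∈ Finset.Icc (-(⌈ρ / r⌉₊ : ℤ) - 1) ⌈ρ / r⌉₊, EBall (a, b + k * r) (2 * r) := by
  rintro ⟨y₁, y₂⟩ ⟨h₁, h₂⟩
  rw [mem_closedBall, Real.dist_eq, abs_le] at h₁ h₂
  set k := ⌊(y₂ - b) / r⌋
  have hk₁ : (k : ℝ) ≤ (y₂ - b) / r := Int.floor_le _
  have hk₂ : (y₂ - b) / r < k + 1 := Int.lt_floor_add_one _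
  have hρ : (y₂ - b) / r ≤ ρ / r := div_le_div_of_nonneg_right h₂.2 hr.le
  have hρ' : -(ρ / r) ≤ (y₂ - b) / r := by
    rw [← neg_div]; exact div_le_div_of_nonneg_right h₂.1 hr.le
  have hK : ρ / r ≤ ⌈ρ / r⌉₊ := Nat.le_ceil _
  refine mem_biUnion (x := k) (Finset.mem_Icc.2 ⟨?_, ?_⟩) ?_
  · have : (-(⌈ρ / r⌉₊ : ℝ) - 1) ≤ k := by linarith
    exact_mod_cast this
  · have : (k : ℝ) ≤ ⌈ρ / r⌉₊ := by linarith
    exact_mod_cast this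
  · have hk₁' : k * r ≤ y₂ - b := (le_div_iff₀ hr).1 hk₁
    have hk₂' : y₂ - b < (k + 1) * r := (div_lt_iff₀ hr).1 hk₂
    show (y₁ - a) ^ 2 + (y₂ - (b + k * r)) ^ 2 < (2 * r) ^ 2
    nlinarith

namespace IsDimensional

variable {μ : Measure (ℝ × ℝ)} {α c : ℝ}

lemma map_swap (h : IsDimensional μ α c) : IsDimensional (μ.map Prod.swap) α c := fun x r hr => by
  rw [Measure.map_apply measurable_swap (measurableSet_EBall x r), preimage_swap_EBall]
  exact h _ r hr

lemma measure_prod_closedBall_le (h : IsDimensional μ α c) (hc : 0 ≤ c) (a b : ℝ) {r ρ : ℝ}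
    (hr : 0 < r) (hrρ : r ≤ ρ) :
    μ (closedBall a r ×ˢ closedBall b ρ) ≤ ENNReal.ofReal (6 * 2 ^ α * c * ρ * r ^ (α - 1)) := by
  set K := ⌈ρ / r⌉₊
  have hcount : ((2 * K + 2 : ℕ) : ℝ) * (c * (2 * r) ^ α) ≤ 6 * 2 ^ α * c * ρ * r ^ (α - 1) := by
    have hK : (K : ℝ) ≤ ρ / r + 1 := (Nat.ceil_lt_add_one (div_nonneg (hr.le.trans hrρ) hr.le)).le
    have h₁ : 1 ≤ ρ / r := (one_le_div hr).2 hrρ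
    have hnum : ((2 * K + 2 : ℕ) : ℝ) ≤ 6 * (ρ / r) := by push_cast; linarith
    calc ((2 * K + 2 : ℕ) : ℝ) * (c * (2 * r) ^ α) ≤ 6 * (ρ / r) * (c * (2 * r) ^ α) := by
          gcongr
      _ = 6 * 2 ^ α * c * ρ * r ^ (α - 1) := by
          rw [Real.mul_rpow zero_le_two hr.le, Real.rpow_sub_one hr.ne']
          ring
  calc μ (closedBall a r ×ˢ closedBall b ρ)
      ≤ μ (⋃ k ∈ Finset.Icc (-(K : ℤ) - 1) K, EBall (a, b + k * r) (2 * r)) :=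
        measure_mono (prod_closedBall_subset_biUnion_EBall hr)
    _ ≤ ∑ k ∈ Finset.Icc (-(K : ℤ) - 1) K, μ (EBall (a, b + k * r) (2 * r)) :=
        measure_biUnion_finset_le _ _
    _ ≤ ∑ _k ∈ Finset.Icc (-(K : ℤ) - 1) K, ENNReal.ofReal (c * (2 * r) ^ α) :=
        Finset.sum_le_sum fun k _ => h _ _ (by positivity)
    _ = ENNReal.ofReal (((2 * K + 2 : ℕ) : ℝ) * (c * (2 * r) ^ α)) := by
        rw [Finset.sum_const, Int.card_Icc, nsmul_eq_mul,
          ENNReal.ofReal_mul (Nat.cast_nonneg (2 * K + 2)), ENNReal.ofReal_natCast]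
        congr 2
        omega
    _ ≤ ENNReal.ofReal (6 * 2 ^ α * c * ρ * r ^ (α - 1)) := ENNReal.ofReal_le_ofReal hcount

lemma measure_prod_closedBall_le' (h : IsDimensional μ α c) (hc : 0 ≤ c) (a b : ℝ) {r ρ : ℝ}
    (hr : 0 < r) (hrρ : r ≤ ρ) :
    μ (closedBall a ρ ×ˢ closedBall b r) ≤ ENNReal.ofReal (6 * 2 ^ α * c * ρ * r ^ (α - 1)) := by
  have := h.map_swap.measure_prod_closedBall_le hc b a hr hrρ
  rwa [Measure.map_apply measurable_swap (measurableSet_closedBall.prod measurableSet_closedBall),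
    preimage_swap_prod] at this

lemma measure_axes_inter_closedBall (h : IsDimensional μ α c) (hc : 0 ≤ c) (hα : 1 < α)
    (x : ℝ × ℝ) {L : ℝ} (hL : 0 < L) :
    μ ({y | y.1 = x.1 ∨ y.2 = x.2} ∩ closedBall x L) = 0 := by
  set A := {y : ℝ × ℝ | y.1 = x.1 ∨ y.2 = x.2} ∩ closedBall x L
  set f : ℝ → ℝ≥0∞ := fun ε => ENNReal.ofReal (2 * (6 * 2 ^ α * c * L * ε ^ (α - 1)))
  have hbound : ∀ ε ∈ Ioo 0 L, μ A ≤ f ε := by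
    rintro ε ⟨hε, hεL⟩
    have hsub :
        A ⊆ closedBall x.1 ε ×ˢ closedBall x.2 L ∪ closedBall x.1 L ×ˢ closedBall x.2 ε := by
      rintro y ⟨hy | hy, hyL⟩ <;> rw [← closedBall_prod_same] at hyL
      · exact Or.inl ⟨by simp [hy, hε.le], hyL.2⟩
      · exact Or.inr ⟨hyL.1, by simp [hy, hε.le]⟩
    calc μ A
        ≤ μ (closedBall x.1 ε ×ˢ closedBall x.2 L) + μ (closedBall x.1 L ×ˢ closedBall x.2 ε) :=
          (measure_mono hsub).trans (measure_union_le _ _)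
      _ ≤ ENNReal.ofReal (6 * 2 ^ α * c * L * ε ^ (α - 1)) +
            ENNReal.ofReal (6 * 2 ^ α * c * L * ε ^ (α - 1)) :=
          add_le_add (h.measure_prod_closedBall_le hc _ _ hε hεL.le)
            (h.measure_prod_closedBall_le' hc _ _ hε hεL.le)
      _ = f ε := by rw [← ENNReal.ofReal_add (by positivity) (by positivity), ← two_mul]
  have hf : Tendsto f (𝓝[>] 0) (𝓝 0) := by
    have : ContinuousAt f 0 := ENNReal.continuous_ofReal.continuousAt.comp
      (((Real.continuousAt_rpow_const 0 _ (Or.inr (by linarith))).const_mul _).const_mul _)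
    simpa [f, Real.zero_rpow (by linarith : α - 1 ≠ 0)] using
      this.tendsto.mono_left nhdsWithin_le_nhds
  exact nonpos_iff_eq_zero.1 (ge_of_tendsto hf (eventually_of_mem (Ioo_mem_nhdsGT hL) hbound))

end IsDimensional

lemma exists_mem_dyadicShell (J : ℝ) {t : ℝ} (ht : 0 < t) (htJ : t ≤ 2 ^ J) :
    ∃ m : ℕ, t ∈ dyadicShell J m := by
  obtain ⟨m, hm₁, hm₂⟩ := exists_nat_pow_near ((one_le_div ht).2 htJ) one_lt_two
  have hcast : ((m : ℝ) + 1) = ((m + 1 : ℕ) : ℝ) := by push_cast; ring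
  refine ⟨m, ?_, ?_⟩
  · rw [Real.rpow_sub two_pos, hcast, Real.rpow_natCast, div_lt_iff₀ (by positivity)]
    rwa [div_lt_iff₀ ht, mul_comm] at hm₂
  · rw [Real.rpow_sub two_pos, Real.rpow_natCast, le_div_iff₀ (by positivity)]
    rwa [le_div_iff₀ ht, mul_comm] at hm₁

lemma inv_ofReal_rpow_one_sub_le {s a t : ℝ} (hs : s ≤ 1) (ha : 0 < a) (hat : a ≤ t) :
    (ENNReal.ofReal (t ^ (1 - s)))⁻¹ ≤ ENNReal.ofReal (a ^ (s - 1)) := by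
  rw [show s - 1 = -(1 - s) by ring, Real.rpow_neg ha.le, ENNReal.ofReal_inv_of_pos (by positivity)]
  exact ENNReal.inv_le_inv.2 (ENNReal.ofReal_le_ofReal (Real.rpow_le_rpow ha.le hat (by linarith)))

lemma productKernel_le_of_mem_dyadicShell {s J : ℝ} (hs : s ≤ 1) {x y : ℝ × ℝ} {m n : ℕ}
    (hm : dist y.1 x.1 ∈ dyadicShell J m) (hn : dist y.2 x.2 ∈ dyadicShell J n) :
    productKernel s x y ≤
      ENNReal.ofReal ((2 ^ (J - (m + 1))) ^ (s - 1)) *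
        ENNReal.ofReal ((2 ^ (J - (n + 1))) ^ (s - 1)) := by
  rw [productKernel, abs_sub_comm x.1, abs_sub_comm x.2, ← Real.dist_eq, ← Real.dist_eq]
  exact mul_le_mul' (inv_ofReal_rpow_one_sub_le hs (by positivity) hm.1.le)
    (inv_ofReal_rpow_one_sub_le hs (by positivity) hn.1.le)

lemma dyadic_term_le {s α β J c : ℝ} (hc : 0 ≤ c) (hβs : β ≤ s) (hβα : β ≤ α + s - 2) (m n : ℕ) :
    (2 ^ (J - (m + 1))) ^ (s - 1) * (2 ^ (J - (n + 1))) ^ (s - 1) *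
        (6 * 2 ^ α * c * 2 ^ (J - n) * (2 ^ (J - m)) ^ (α - 1)) ≤
      6 * 2 ^ (2 - 2 * s + α + J * (α + 2 * s - 2)) * c * ((2 ^ (-β)) ^ m * (2 ^ (-β)) ^ n) := by
  have hlhs : (2 ^ (J - (m + 1))) ^ (s - 1) * (2 ^ (J - (n + 1))) ^ (s - 1) *
        (6 * 2 ^ α * c * 2 ^ (J - n) * (2 ^ (J - m)) ^ (α - 1)) =
      6 * c * 2 ^ ((J - (m + 1)) * (s - 1) + (J - (n + 1)) * (s - 1) + α + (J - n) +
        (J - m) * (α - 1)) := by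
    simp only [Real.rpow_add two_pos, ← Real.rpow_mul zero_le_two]
    ring
  have hrhs :
      6 * 2 ^ (2 - 2 * s + α + J * (α + 2 * s - 2)) * c * ((2 ^ (-β)) ^ m * (2 ^ (-β)) ^ n) =
        6 * c * 2 ^ (2 - 2 * s + α + J * (α + 2 * s - 2) + (-β * m + -β * n)) := by
    simp only [Real.rpow_add two_pos, ← Real.rpow_mul_natCast zero_le_two]
    ring
  rw [hlhs, hrhs]
  gcongr 6 * c * ?_
  refine Real.rpow_le_rpow_of_exponent_le one_le_two ?_
  nlinarith [mul_le_mul_of_nonneg_left hβα (Nat.cast_nonneg m),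
      mul_le_mul_of_nonneg_left hβs (Nat.cast_nonneg n)]

lemma ofReal_mul_ofReal_mul_le {a b r t : ℝ} {x : ℝ≥0∞} (ha : 0 ≤ a) (hb : 0 ≤ b)
    (hx : x ≤ ENNReal.ofReal r) (h : a * b * r ≤ t) :
    ENNReal.ofReal a * ENNReal.ofReal b * x ≤ ENNReal.ofReal t :=
  calc ENNReal.ofReal a * ENNReal.ofReal b * x
      ≤ ENNReal.ofReal a * ENNReal.ofReal b * ENNReal.ofReal r := by gcongr
    _ = ENNReal.ofReal (a * b * r) := by
        rw [ENNReal.ofReal_mul (mul_nonneg ha hb), ENNReal.ofReal_mul ha]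
    _ ≤ ENNReal.ofReal t := ENNReal.ofReal_le_ofReal h

lemma tsum_ofReal_mul_geometric_mul_geometric {a q : ℝ} (ha : 0 ≤ a) (hq : 0 ≤ q) (hq1 : q < 1) :
    ∑' p : ℕ × ℕ, ENNReal.ofReal (a * (q ^ p.1 * q ^ p.2)) =
      ENNReal.ofReal (a * ((1 - q)⁻¹ * (1 - q)⁻¹)) := by
  have hgeom : ∑' n : ℕ, ENNReal.ofReal q ^ n = ENNReal.ofReal (1 - q)⁻¹ := by
    rw [ENNReal.tsum_geometric, ← ENNReal.ofReal_one, ← ENNReal.ofReal_sub _ hq,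
      ENNReal.ofReal_inv_of_pos (sub_pos.2 hq1)]
  simp_rw [ENNReal.ofReal_mul ha, ENNReal.ofReal_mul (pow_nonneg hq _), ENNReal.ofReal_pow hq,
    ENNReal.tsum_mul_left,
    ENNReal.tsum_prod (f := fun m n => ENNReal.ofReal q ^ m * ENNReal.ofReal q ^ n),
    ENNReal.tsum_mul_left, ENNReal.tsum_mul_right, hgeom,
    ENNReal.ofReal_mul (inv_nonneg.2 (sub_pos.2 hq1).le)]

theorem exists_lintegral_productKernel_le {s α : ℝ} (hs : 0 < s) (hs₁ : s ≤ 1) (hα : 2 - s < α)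
    (J : ℝ) :
    ∃ K : ℝ, 0 < K ∧ ∀ (μ : Measure (ℝ × ℝ)) (c : ℝ) (x : ℝ × ℝ), IsDimensional μ α c → 0 ≤ c →
      (∀ᵐ y ∂μ, y ∈ closedBall x (2 ^ J)) →
        ∫⁻ y, productKernel s x y ∂μ ≤ ENNReal.ofReal (K * c) := by
  set β := min s (α + s - 2)
  have hβs : β ≤ s := min_le_left _ _
  have hβα : β ≤ α + s - 2 := min_le_right _ _
  set q : ℝ := 2 ^ (-β)
  have hq : 0 < q := by positivity
  have hq₁ : q < 1 :=
    Real.rpow_lt_one_of_one_lt_of_neg one_lt_two (neg_neg_of_pos (lt_min hs (by linarith)))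
  set A : ℝ := 6 * 2 ^ (2 - 2 * s + α + J * (α + 2 * s - 2))
  refine ⟨A * ((1 - q)⁻¹ * (1 - q)⁻¹), by have := sub_pos.2 hq₁; positivity,
    fun μ c x hμ hc hbox => ?_⟩
  set w : ℕ → ℝ≥0∞ := fun m => ENNReal.ofReal ((2 ^ (J - (m + 1))) ^ (s - 1))
  set S : ℕ × ℕ → Set (ℝ × ℝ) := fun p =>
    {y | dist y.1 x.1 ∈ dyadicShell J p.1 ∧ dist y.2 x.2 ∈ dyadicShell J p.2}
  have hS : ∀ p, MeasurableSet (S p) := fun p =>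
    ((by fun_prop : Measurable fun y : ℝ × ℝ => dist y.1 x.1) measurableSet_Ioc).inter
      ((by fun_prop : Measurable fun y : ℝ × ℝ => dist y.2 x.2) measurableSet_Ioc)
  have hkernel :
      ∀ᵐ y ∂μ, productKernel s x y ≤ ∑' p, (S p).indicator (fun _ => w p.1 * w p.2) y := by
    have haxes := measure_eq_zero_iff_ae_notMem.1
      (hμ.measure_axes_inter_closedBall hc (by linarith) x (by positivity : (0 : ℝ) < 2 ^ J))
    filter_upwards [hbox, haxes] with y hy hyaxes
    have hy' : y.1 ≠ x.1 ∧ y.2 ≠ x.2 := by simpa [hy, not_or] using hyaxes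
    rw [mem_closedBall, Prod.dist_eq, max_le_iff] at hy
    obtain ⟨m, hm⟩ := exists_mem_dyadicShell J (dist_pos.2 hy'.1) hy.1
    obtain ⟨n, hn⟩ := exists_mem_dyadicShell J (dist_pos.2 hy'.2) hy.2
    calc productKernel s x y ≤ w m * w n := productKernel_le_of_mem_dyadicShell hs₁ hm hn
      _ = (S (m, n)).indicator (fun _ => w (m, n).1 * w (m, n).2) y :=
        (indicator_of_mem (show y ∈ S (m, n) from ⟨hm, hn⟩) (fun _ => w m * w n)).symm
      _ ≤ ∑' p, (S p).indicator (fun _ => w p.1 * w p.2) y := ENNReal.le_tsum (m, n)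
  have hterm : ∀ p : ℕ × ℕ,
      w p.1 * w p.2 * μ (S p) ≤ ENNReal.ofReal (A * c * (q ^ p.1 * q ^ p.2)) := by
    rintro ⟨m, n⟩
    have hS_sub : S (m, n) ⊆ closedBall x.1 (2 ^ (J - m)) ×ˢ closedBall x.2 (2 ^ (J - n)) :=
      fun y hy => ⟨hy.1.2, hy.2.2⟩
    rcases le_total n m with hnm | hmn
    · have hr : (2 : ℝ) ^ (J - m) ≤ 2 ^ (J - n) :=
        Real.rpow_le_rpow_of_exponent_le one_le_two (by linarith [(Nat.cast_le (α := ℝ)).2 hnm])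
      exact ofReal_mul_ofReal_mul_le (by positivity) (by positivity)
        ((measure_mono hS_sub).trans (hμ.measure_prod_closedBall_le hc _ _ (by positivity) hr))
        (dyadic_term_le hc hβs hβα m n)
    · have hr : (2 : ℝ) ^ (J - n) ≤ 2 ^ (J - m) :=
        Real.rpow_le_rpow_of_exponent_le one_le_two (by linarith [(Nat.cast_le (α := ℝ)).2 hmn])
      refine ofReal_mul_ofReal_mul_le (by positivity) (by positivity)
        ((measure_mono hS_sub).trans (hμ.measure_prod_closedBall_le' hc _ _ (by positivity) hr)) ?_
      linarith [dyadic_term_le (J := J) hc hβs hβα n m]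
  calc ∫⁻ y, productKernel s x y ∂μ
      ≤ ∫⁻ y, ∑' p, (S p).indicator (fun _ => w p.1 * w p.2) y ∂μ := lintegral_mono_ae hkernel
    _ = ∑' p, w p.1 * w p.2 * μ (S p) := by
        rw [lintegral_tsum fun p => (measurable_const.indicator (hS p)).aemeasurable]
        exact tsum_congr fun p => lintegral_indicator_const (hS p) _
    _ ≤ ∑' p : ℕ × ℕ, ENNReal.ofReal (A * c * (q ^ p.1 * q ^ p.2)) := ENNReal.tsum_le_tsum hterm
    _ = ENNReal.ofReal (A * ((1 - q)⁻¹ * (1 - q)⁻¹) * c) := by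
        rw [tsum_ofReal_mul_geometric_mul_geometric (by positivity) hq.le hq₁]
        ring_nf

theorem stmt11_general (s α : ℝ) (hs : 0 < s) (hs' : s < 1) (hα : 2 - s < α)
    (Ω : Set (ℝ × ℝ)) (hΩ : Bornology.IsBounded Ω) :
    ∃ C : ℝ, 0 < C ∧
      ∀ (μ : Measure (ℝ × ℝ)) (_ : IsProbabilityMeasure μ) (c : ℝ), 0 ≤ c →
        μ Ωᶜ = 0 →
        (∀ (x : ℝ × ℝ) (r : ℝ), 0 < r → μ (EBall x r) ≤ ENNReal.ofReal (c * r ^ α)) →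
        (∫⁻ x, ∫⁻ y,
            (ENNReal.ofReal (|x.1 - y.1| ^ (1 - s)))⁻¹ *
              (ENNReal.ofReal (|x.2 - y.2| ^ (1 - s)))⁻¹ ∂μ ∂μ) ≤
          ENNReal.ofReal (C * c) := by
  obtain ⟨R, hR⟩ := hΩ.subset_closedBall 0
  obtain ⟨J, hJ⟩ := pow_unbounded_of_one_lt (2 * R) one_lt_two
  obtain ⟨K, hK, hinner⟩ := exists_lintegral_productKernel_le hs hs'.le hα J
  refine ⟨K, hK, fun μ _ c hc hΩc hμ => ?_⟩
  have hsupp : ∀ᵐ x ∂μ, x ∈ closedBall (0 : ℝ × ℝ) R :=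
    measure_mono_null (compl_subset_compl.2 hR) hΩc
  have hpair : ∀ x ∈ closedBall (0 : ℝ × ℝ) R, ∀ y ∈ closedBall (0 : ℝ × ℝ) R,
      y ∈ closedBall x (2 ^ (J : ℝ)) := fun x hx y hy => by
    rw [mem_closedBall] at hx hy ⊢
    rw [Real.rpow_natCast]
    linarith [dist_triangle_right y x 0]
  calc ∫⁻ x, ∫⁻ y, productKernel s x y ∂μ ∂μ ≤ ∫⁻ _, ENNReal.ofReal (K * c) ∂μ :=
        lintegral_mono_ae <| hsupp.mono fun x hx =>
          hinner μ c x hμ hc <| hsupp.mono fun y hy => hpair x hx y hy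
    _ = ENNReal.ofReal (K * c) := by rw [lintegral_const, measure_univ, mul_one]

/-- the fractal-measure bound for the product kernel in the proof of
Theorem 4.4. Let `0 < s < 1`, `2 - s < α ≤ 2` and `Ω ⊆ ℝ²` bounded. There is
`C = C(s, α, Ω)` such that every α-dimensional Borel probability measure `μ` with
constant `c` supported in `Ω` satisfies
`∫∫ |x₁-y₁|^{s-1} |x₂-y₂|^{s-1} dμ(x) dμ(y) ≤ C c`. -/
theorem stmt11 (s α : ℝ) (hs : 0 < s) (hs' : s < 1) (hα : 2 - s < α) (hα' : α ≤ 2)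
    (Ω : Set (ℝ × ℝ)) (hΩ : Bornology.IsBounded Ω) :
    ∃ C : ℝ, 0 < C ∧
      ∀ (μ : Measure (ℝ × ℝ)) (_ : IsProbabilityMeasure μ) (c : ℝ), 0 ≤ c →
        μ Ωᶜ = 0 →
        (∀ (x : ℝ × ℝ) (r : ℝ), 0 < r → μ (EBall x r) ≤ ENNReal.ofReal (c * r ^ α)) →
        (∫⁻ x, ∫⁻ y,
            (ENNReal.ofReal (|x.1 - y.1| ^ (1 - s)))⁻¹ *
              (ENNReal.ofReal (|x.2 - y.2| ^ (1 - s)))⁻¹ ∂μ ∂μ) ≤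
          ENNReal.ofReal (C * c) :=
  stmt11_general s α hs hs' hα Ω hΩ
end
end

section
/- For every Schwartz function φ on ℝ², every k > 0 and every x ∈ ℝ²: (k/(4π)) ∫_{ℝ²} e^{i(k/4)((z₁−x₁)²−(z₂−x₂)²)} φ(z) dz = (2π)^{−2} ∫_{ℝ²} e^{i x·ξ} e^{−i(ξ₁²−ξ₂²)/k} φ̂(ξ) dξ. -/
/-
The chirp `e^{iφ_{k,x}(z)}` is the boundary value, as `ε → 0⁺`, of the complex Gaussian
`exp(-a (x₁-z₁)² - b (x₂-z₂)²)` with `a = ε - ik/4` and `b = ε + ik/4 = conj a`. For `ε > 0`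
everything is absolutely integrable, so Fubini and the one-dimensional Gaussian Fourier transform
give the identity with the multiplier `exp(-ξ₁²/(4a) - ξ₂²/(4b))` on the Fourier side and the
constant `(4πa)^{1/2} (4πb)^{1/2} = |4πa|`. All kernels have modulus at most one and both `φ` and
`φ̂` are integrable, so dominated convergence lets `ε → 0⁺` on both sides; the constant tends
to `π|k|`.
-/

open MeasureTheory Real Filter
open scoped ENNReal

noncomputable section

open Complex ComplexConjugate Topology
open scoped FourierTransform SchwartzMap

lemma cpow_half_mul_conj_cpow_half {w : ℂ} (hw : w.arg ≠ π) :
    w ^ (1 / 2 : ℂ) * conj w ^ (1 / 2 : ℂ) = ‖w‖ := by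
  have hconj : conj w ^ (1 / 2 : ℂ) = conj (w ^ (1 / 2 : ℂ)) := by
    have hhalf : conj (1 / 2 : ℂ) = 1 / 2 := by simp [conj_ofNat]
    rw [← conj_conj (conj w ^ _), ← cpow_conj w _ hw, hhalf]
  have hnorm : ‖w ^ (1 / 2 : ℂ)‖ ^ 2 = ‖w‖ := by
    rw [show (1 / 2 : ℂ) = ((1 / 2 : ℝ) : ℂ) by norm_num, norm_cpow_real, ← Real.rpow_natCast,
      ← Real.rpow_mul (norm_nonneg w)]
    norm_num
  rw [hconj, mul_conj, normSq_eq_norm_sq, hnorm]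

-- Mathlib's Fourier transform of Schwartz functions lives on inner product spaces; `ℂ ≃ ℝ × ℝ`
-- supplies one.
lemma integrable_FT_of_schwartz (φ : 𝓢(ℝ × ℝ, ℂ)) : Integrable (FT fun w => φ w) := by
  set ψ : 𝓢(ℂ, ℂ) := SchwartzMap.compCLMOfContinuousLinearEquiv ℝ equivRealProdCLM φ
  have hFT : ∀ w : ℂ, FT (fun w => φ w) (measurableEquivRealProd w) = 𝓕 ψ ((2 * π)⁻¹ • w) := by
    intro w
    rw [SchwartzMap.fourier_coe, Real.fourier_eq', FT,
      ← volume_preserving_equiv_real_prod.integral_comp']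
    congr 1 with v
    simp only [measurableEquivRealProd_apply, Complex.inner, smul_eq_mul, ψ,
      SchwartzMap.compCLMOfContinuousLinearEquiv_apply, Function.comp_apply, real_smul, mul_assoc,
      re_ofReal_mul]
    simp only [mul_re, conj_re, conj_im]
    congr 2
    push_cast
    field_simp
    ring
  rw [← volume_preserving_equiv_real_prod.integrable_comp_emb
    measurableEquivRealProd.measurableEmbedding]
  simp_rw [Function.comp_def, hFT]
  exact (𝓕 ψ).integrable.comp_smul (by positivity)

lemma tendsto_integral_mul_of_norm_le_one {ι α 𝕜 : Type*} [RCLike 𝕜] [MeasurableSpace α]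
    {μ : Measure α} {l : Filter ι} [l.IsCountablyGenerated] {G : ι → α → 𝕜} {g f : α → 𝕜}
    (hf : Integrable f μ) (hG_meas : ∀ i, AEStronglyMeasurable (G i) μ)
    (hG_le : ∀ᶠ i in l, ∀ y, ‖G i y‖ ≤ 1) (hG_lim : ∀ y, Tendsto (fun i => G i y) l (𝓝 (g y))) :
    Tendsto (fun i => ∫ y, G i y * f y ∂μ) l (𝓝 (∫ y, g y * f y ∂μ)) := by
  refine tendsto_integral_filter_of_dominated_convergence (fun y => ‖f y‖)
    (Eventually.of_forall fun i => (hG_meas i).mul hf.aestronglyMeasurable) ?_ hf.norm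
    (ae_of_all _ fun y => (hG_lim y).mul_const (f y))
  filter_upwards [hG_le] with i hi
  refine ae_of_all _ fun y => ?_
  rw [norm_mul]
  exact mul_le_of_le_one_left (norm_nonneg _) (hi y)

def prodGaussian (a b : ℂ) (v : ℝ × ℝ) : ℂ :=
  cexp (-a * v.1 ^ 2 - b * v.2 ^ 2)

lemma prodGaussian_eq_mul (a b : ℂ) (v : ℝ × ℝ) :
    prodGaussian a b v = cexp (-a * v.1 ^ 2) * cexp (-b * v.2 ^ 2) := by
  rw [prodGaussian, sub_eq_add_neg, Complex.exp_add, neg_mul b]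

lemma norm_prodGaussian_le_one {a b : ℂ} (ha : 0 ≤ a.re) (hb : 0 ≤ b.re) (v : ℝ × ℝ) :
    ‖prodGaussian a b v‖ ≤ 1 := by
  have hre : (-a * v.1 ^ 2 - b * v.2 ^ 2).re = -(a.re * v.1 ^ 2 + b.re * v.2 ^ 2) := by
    simp only [← ofReal_pow, sub_re, mul_re, neg_re, ofReal_re, ofReal_im, mul_zero, sub_zero,
      neg_im]
    ring
  rw [prodGaussian, norm_exp, hre, Real.exp_le_one_iff, neg_nonpos]
  positivity

lemma integrable_prodGaussian {a b : ℂ} (ha : 0 < a.re) (hb : 0 < b.re) :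
    Integrable (prodGaussian a b) := by
  simp_rw [funext (prodGaussian_eq_mul a b), Measure.volume_eq_prod]
  exact (integrable_cexp_neg_mul_sq ha).mul_prod (integrable_cexp_neg_mul_sq hb)

lemma re_inv_pos {c : ℂ} (hc : 0 < c.re) : 0 < (c⁻¹).re := by
  have hc0 : c ≠ 0 := by rintro rfl; simp at hc
  rw [inv_re]
  exact div_pos hc (normSq_pos.2 hc0)

lemma integral_cexp_mul_cexp_neg_inv_mul_sq {c : ℂ} (hc : 0 < c.re) (t : ℝ) :
    ∫ s : ℝ, cexp (I * t * s) * cexp (-(4 * c)⁻¹ * s ^ 2) =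
      (4 * π * c) ^ (1 / 2 : ℂ) * cexp (-c * t ^ 2) := by
  rw [fourierIntegral_gaussian (re_inv_pos (by simpa using hc))]
  congr 2 <;> field_simp

lemma integral_cexp_mul_prodGaussian {a b : ℂ} (ha : 0 < a.re) (hb : 0 < b.re) (t : ℝ × ℝ) :
    ∫ ξ : ℝ × ℝ, cexp (I * ((t.1 * ξ.1 + t.2 * ξ.2 : ℝ) : ℂ)) *
        prodGaussian (4 * a)⁻¹ (4 * b)⁻¹ ξ =
      (4 * π * a) ^ (1 / 2 : ℂ) * (4 * π * b) ^ (1 / 2 : ℂ) * prodGaussian a b t := by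
  have hsplit : ∀ ξ : ℝ × ℝ, cexp (I * ((t.1 * ξ.1 + t.2 * ξ.2 : ℝ) : ℂ)) *
      prodGaussian (4 * a)⁻¹ (4 * b)⁻¹ ξ =
      (cexp (I * t.1 * ξ.1) * cexp (-(4 * a)⁻¹ * ξ.1 ^ 2)) *
        (cexp (I * t.2 * ξ.2) * cexp (-(4 * b)⁻¹ * ξ.2 ^ 2)) := by
    intro ξ
    rw [prodGaussian_eq_mul, ofReal_add, ofReal_mul, ofReal_mul, mul_add, Complex.exp_add]
    ring_nf
  simp_rw [hsplit, Measure.volume_eq_prod]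
  rw [integral_prod_mul (fun s : ℝ => cexp (I * t.1 * s) * cexp (-(4 * a)⁻¹ * s ^ 2))
    (fun s : ℝ => cexp (I * t.2 * s) * cexp (-(4 * b)⁻¹ * s ^ 2)),
    integral_cexp_mul_cexp_neg_inv_mul_sq ha, integral_cexp_mul_cexp_neg_inv_mul_sq hb,
    prodGaussian_eq_mul]
  ring

lemma integral_cexp_mul_prodGaussian_mul_FT {f : ℝ × ℝ → ℂ} (hf : Integrable f) {a b : ℂ}
    (ha : 0 < a.re) (hb : 0 < b.re) (x : ℝ × ℝ) :
    ∫ ξ : ℝ × ℝ, cexp (I * ((x.1 * ξ.1 + x.2 * ξ.2 : ℝ) : ℂ)) *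
        prodGaussian (4 * a)⁻¹ (4 * b)⁻¹ ξ * FT f ξ =
      (4 * π * a) ^ (1 / 2 : ℂ) * (4 * π * b) ^ (1 / 2 : ℂ) *
        ∫ z : ℝ × ℝ, prodGaussian a b (x - z) * f z := by
  set G := prodGaussian (4 * a)⁻¹ (4 * b)⁻¹
  set E : ℝ × ℝ → ℝ × ℝ → ℂ := fun t ξ => cexp (I * ((t.1 * ξ.1 + t.2 * ξ.2 : ℝ) : ℂ))
  have hphase : ∀ ξ z : ℝ × ℝ, E x ξ * G ξ * (cexp (-(I * ((z.1 * ξ.1 + z.2 * ξ.2 : ℝ) : ℂ))) * f z)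
      = E (x - z) ξ * G ξ * f z := by
    intro ξ z
    have hE : E x ξ * cexp (-(I * ((z.1 * ξ.1 + z.2 * ξ.2 : ℝ) : ℂ))) = E (x - z) ξ := by
      simp only [E, ← Complex.exp_add, Prod.fst_sub, Prod.snd_sub]
      push_cast
      ring_nf
    rw [← hE]
    ring
  have hint : Integrable (Function.uncurry fun ξ z => E (x - z) ξ * G ξ * f z)
      (volume.prod volume) := by
    have hdom := (integrable_prodGaussian (re_inv_pos (c := 4 * a) (by simpa using ha))
      (re_inv_pos (c := 4 * b) (by simpa using hb))).mul_prod hf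
    refine (hdom.bdd_mul (c := 1) (f := fun p => E (x - p.2) p.1) (by fun_prop)
      (ae_of_all _ fun p => (norm_exp_I_mul_ofReal _).le)).congr (ae_of_all _ fun p => ?_)
    exact (mul_assoc _ _ _).symm
  calc ∫ ξ, E x ξ * G ξ * FT f ξ
      = ∫ ξ, ∫ z, E (x - z) ξ * G ξ * f z := by
        simp_rw [FT, ← integral_const_mul, hphase]
    _ = ∫ z, ∫ ξ, E (x - z) ξ * G ξ * f z := integral_integral_swap hint
    _ = ∫ z, (4 * π * a) ^ (1 / 2 : ℂ) * (4 * π * b) ^ (1 / 2 : ℂ) *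
          (prodGaussian a b (x - z) * f z) := by
        congr 1 with z
        rw [integral_mul_const, integral_cexp_mul_prodGaussian ha hb (x - z), mul_assoc]
    _ = _ := integral_const_mul _ _

def fresnelParam (k ε : ℝ) : ℂ := ε - k / 4 * I

lemma fresnelParam_re (k ε : ℝ) : (fresnelParam k ε).re = ε := by simp [fresnelParam]

lemma fresnelParam_ne_zero {k : ℝ} (hk : k ≠ 0) (ε : ℝ) : fresnelParam k ε ≠ 0 :=
  fun h => hk (by simpa [fresnelParam] using congrArg im h)

lemma fresnelParam_neg (k ε : ℝ) : fresnelParam (-k) ε = conj (fresnelParam k ε) := by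
  simp [fresnelParam, conj_ofNat, neg_div]

lemma inv_four_mul_fresnelParam_zero (k : ℝ) : (4 * fresnelParam k 0)⁻¹ = I / k := by
  rw [fresnelParam, ofReal_zero, zero_sub, mul_neg, ← mul_assoc, mul_div_cancel₀ _ (by norm_num),
    ← neg_inv, mul_inv, inv_I]
  ring

@[fun_prop]
lemma continuous_fresnelParam (k : ℝ) : Continuous (fresnelParam k) := by
  unfold fresnelParam
  fun_prop

lemma continuous_inv_four_mul_fresnelParam {k : ℝ} (hk : k ≠ 0) :
    Continuous fun ε => (4 * fresnelParam k ε)⁻¹ :=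
  (continuous_const.mul (continuous_fresnelParam k)).inv₀
    fun ε => mul_ne_zero (by norm_num) (fresnelParam_ne_zero hk ε)

lemma tendsto_integral_prodGaussian_fresnelParam {f : ℝ × ℝ → ℂ} (hf : Integrable f) (k : ℝ)
    (x : ℝ × ℝ) :
    Tendsto (fun ε => ∫ z, prodGaussian (fresnelParam k ε) (fresnelParam (-k) ε) (x - z) * f z)
      (𝓝[>] 0) (𝓝 (∫ z, cexp (I * phase k x z) * f z)) := by
  refine tendsto_integral_mul_of_norm_le_one hf
    (fun ε => (by unfold prodGaussian; fun_prop : Continuous _).aestronglyMeasurable) ?_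
    fun z => ?_
  · filter_upwards [self_mem_nhdsWithin] with ε (hε : 0 < ε)
    exact fun z => norm_prodGaussian_le_one ((fresnelParam_re k ε).symm ▸ hε.le)
      ((fresnelParam_re (-k) ε).symm ▸ hε.le) (x - z)
  · have hcont : Continuous fun ε =>
        prodGaussian (fresnelParam k ε) (fresnelParam (-k) ε) (x - z) := by
      unfold prodGaussian
      fun_prop
    have h0 : prodGaussian (fresnelParam k 0) (fresnelParam (-k) 0) (x - z) =
        cexp (I * phase k x z) := by
      simp only [prodGaussian, fresnelParam, phase, Prod.fst_sub, Prod.snd_sub]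
      push_cast
      ring_nf
    exact h0 ▸ (hcont.tendsto 0).mono_left nhdsWithin_le_nhds

lemma tendsto_integral_prodGaussian_inv_fresnelParam {g : ℝ × ℝ → ℂ} (hg : Integrable g)
    {k : ℝ} (hk : k ≠ 0) (x : ℝ × ℝ) :
    Tendsto (fun ε => ∫ ξ, cexp (I * ((x.1 * ξ.1 + x.2 * ξ.2 : ℝ) : ℂ)) *
        prodGaussian (4 * fresnelParam k ε)⁻¹ (4 * fresnelParam (-k) ε)⁻¹ ξ * g ξ)
      (𝓝[>] 0) (𝓝 (∫ ξ, cexp (I * ((x.1 * ξ.1 + x.2 * ξ.2 : ℝ) : ℂ)) *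
        cexp (-(I * (((ξ.1 ^ 2 - ξ.2 ^ 2) / k : ℝ) : ℂ))) * g ξ)) := by
  have hcont₁ := continuous_inv_four_mul_fresnelParam hk
  have hcont₂ := continuous_inv_four_mul_fresnelParam (neg_ne_zero.2 hk)
  refine tendsto_integral_mul_of_norm_le_one hg
    (fun ε => (by unfold prodGaussian; fun_prop : Continuous _).aestronglyMeasurable) ?_
    fun ξ => ?_
  · filter_upwards [self_mem_nhdsWithin] with ε (hε : 0 < ε)
    intro ξ
    rw [norm_mul, norm_exp_I_mul_ofReal, one_mul]
    exact norm_prodGaussian_le_one (re_inv_pos (by simpa [fresnelParam_re] using hε)).le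
      (re_inv_pos (by simpa [fresnelParam_re] using hε)).le ξ
  · have hcont : Continuous fun ε => cexp (I * ((x.1 * ξ.1 + x.2 * ξ.2 : ℝ) : ℂ)) *
        prodGaussian (4 * fresnelParam k ε)⁻¹ (4 * fresnelParam (-k) ε)⁻¹ ξ := by
      unfold prodGaussian
      fun_prop
    have h0 : prodGaussian (4 * fresnelParam k 0)⁻¹ (4 * fresnelParam (-k) 0)⁻¹ ξ =
        cexp (-(I * (((ξ.1 ^ 2 - ξ.2 ^ 2) / k : ℝ) : ℂ))) := by
      rw [prodGaussian, inv_four_mul_fresnelParam_zero, inv_four_mul_fresnelParam_zero]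
      push_cast
      field_simp
      ring_nf
    exact h0 ▸ (hcont.tendsto 0).mono_left nhdsWithin_le_nhds

theorem integral_cexp_mul_chirp_mul_FT {f : ℝ × ℝ → ℂ} (hf : Integrable f)
    (hFf : Integrable (FT f)) {k : ℝ} (hk : k ≠ 0) (x : ℝ × ℝ) :
    ∫ ξ, cexp (I * ((x.1 * ξ.1 + x.2 * ξ.2 : ℝ) : ℂ)) *
        cexp (-(I * (((ξ.1 ^ 2 - ξ.2 ^ 2) / k : ℝ) : ℂ))) * FT f ξ =
      ((π * |k| : ℝ) : ℂ) * ∫ z, cexp (I * phase k x z) * f z := by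
  refine tendsto_nhds_unique (tendsto_integral_prodGaussian_inv_fresnelParam hFf hk x) ?_
  have hnorm : Tendsto (fun ε : ℝ => ((‖4 * π * fresnelParam k ε‖ : ℝ) : ℂ)) (𝓝[>] 0)
      (𝓝 ((π * |k| : ℝ) : ℂ)) := by
    have h0 : ‖4 * π * fresnelParam k 0‖ = π * |k| := by
      simp only [fresnelParam, ofReal_zero, zero_sub, mul_neg, norm_neg, Complex.norm_mul,
        Complex.norm_ofNat, norm_real, norm_eq_abs, abs_of_pos pi_pos, Complex.norm_div, norm_I,
        mul_one]
      ring
    have hcont : Continuous fun ε : ℝ => ((‖4 * π * fresnelParam k ε‖ : ℝ) : ℂ) := by fun_prop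
    exact h0 ▸ (hcont.tendsto 0).mono_left nhdsWithin_le_nhds
  refine (hnorm.mul (tendsto_integral_prodGaussian_fresnelParam hf k x)).congr' ?_
  filter_upwards [self_mem_nhdsWithin] with ε (hε : 0 < ε)
  have hre : 0 < (fresnelParam k ε).re := by rwa [fresnelParam_re]
  have hre' : 0 < (fresnelParam (-k) ε).re := by rwa [fresnelParam_re]
  have harg : (4 * π * fresnelParam k ε).arg ≠ π :=
    slitPlane_arg_ne_pi (mem_slitPlane_iff.2 (Or.inl (by simpa using mul_pos (by positivity) hre)))
  rw [integral_cexp_mul_prodGaussian_mul_FT hf hre hre' x, fresnelParam_neg,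
    ← cpow_half_mul_conj_cpow_half harg]
  simp [conj_ofNat]

/-- the distributional Fresnel identity of Section 4. For every
Schwartz function `φ` on `ℝ²`, every `k > 0` and every `x ∈ ℝ²`,
`(k/(4π)) ∫ e^{i(k/4)((z₁-x₁)²-(z₂-x₂)²)} φ(z) dz
  = (2π)^{-2} ∫ e^{ix·ξ} e^{-i(ξ₁²-ξ₂²)/k} φ̂(ξ) dξ`. -/
theorem stmt12 (φ : SchwartzMap (ℝ × ℝ) ℂ) (k : ℝ) (hk : 0 < k) (x : ℝ × ℝ) :
    ((k / (4 * Real.pi) : ℝ) : ℂ) *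
        ∫ z : ℝ × ℝ, Complex.exp (Complex.I * ((phase k x z : ℝ) : ℂ)) * φ z =
      (2 * Real.pi : ℂ) ^ (-2 : ℤ) *
        ∫ ξ : ℝ × ℝ,
          Complex.exp (Complex.I * ((x.1 * ξ.1 + x.2 * ξ.2 : ℝ) : ℂ)) *
          Complex.exp (-(Complex.I * (((ξ.1 ^ 2 - ξ.2 ^ 2) / k : ℝ) : ℂ))) *
          FT (fun w => φ w) ξ := by
  rw [integral_cexp_mul_chirp_mul_FT φ.integrable (integrable_FT_of_schwartz φ) hk.ne' x,
    abs_of_pos hk, zpow_neg, zpow_two]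
  push_cast
  field_simp
  ring

end
end
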